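/- Let Φ = X + θ₋ψ₊ + θ₊ψ₋ + θ₋θ₊F + zθ₋θ₊Y be a z-constrained degree-(0,0) superfield in 𝒜_A with smooth A-valued components of degrees deg X = (0,0), deg ψ₊ = (0,1), deg ψ₋ = (1,0), deg F = (1,1), deg Y = (0,0). Then the z-degree-zero part of (D₋∘D₊ + D₊∘D₋)Φ vanishes identically on ℝ² if and only if the free component equations of motion hold: F = 0, ∂₊ψ₊ = 0, ∂₋ψ₋ = 0, and ∂₋∂₊X = 0. -/

import Mathlib

noncomputable section

/-- The group `ℤ₂ × ℤ₂`. -/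
abbrev G2 : Type := ZMod 2 × ZMod 2

/-- The standard scalar product on `ℤ₂ × ℤ₂`. -/
def ip (γ γ' : G2) : ZMod 2 := γ.1 * γ'.1 + γ.2 * γ'.2

/-- The Koszul sign `(-1)^x`. -/
def ksign (x : ZMod 2) : ℝ := if x = 0 then 1 else -1

/-- Two-dimensional Minkowski spacetime in light-cone coordinates `(x⁻, x⁺)`. -/
abbrev E2 : Type := ℝ × ℝ

/-- Coefficient families `(k, a, b) ↦ f_{k,a,b}` representing the elements
`Σ_{k,a,b} z^k θ₋^a θ₊^b f_{k,a,b}(x⁻,x⁺)` of the `ℤ₂²`-graded algebra `𝒜_A` of superfields on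
`ℤ₂²`-Minkowski spacetime `ℝ^{2|1,1,1}`. -/
abbrev SF (A : Type*) : Type _ := ℕ → Bool → Bool → (E2 → A)

/-- `Bool → ZMod 2`. -/
def bz (a : Bool) : ZMod 2 := if a then 1 else 0

/-- The `ℤ₂²`-degree of the monomial `z^k θ₋^a θ₊^b`, where `deg z = (1,1)`,
`deg θ₋ = (0,1)` and `deg θ₊ = (1,0)`. -/
def mdeg (k : ℕ) (a b : Bool) : G2 := ((k : ZMod 2) + bz b, (k : ZMod 2) + bz a)

/-- The light-cone partial derivative `∂₋`. -/
def pdm {W : Type*} [NormedAddCommGroup W] [NormedSpace ℝ W] (f : E2 → W) : E2 → W :=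
  fun p => fderiv ℝ f p (1, 0)

/-- The light-cone partial derivative `∂₊`. -/
def pdp {W : Type*} [NormedAddCommGroup W] [NormedSpace ℝ W] (f : E2 → W) : E2 → W :=
  fun p => fderiv ℝ f p (0, 1)

namespace SF

variable {A : Type*} [NormedRing A] [NormedAlgebra ℝ A]

/-- `∂₋` acting coefficientwise on superfields. -/
def Pm (c : SF A) : SF A := fun k a b => pdm (c k a b)

/-- `∂₊` acting coefficientwise on superfields. -/
def Pp (c : SF A) : SF A := fun k a b => pdp (c k a b)

/-- `∂_z`, acting on normal-form monomials by `∂_z(z^k θ₋^a θ₊^b f) = k z^{k-1} θ₋^a θ₊^b f`. -/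
def Pz (c : SF A) : SF A := fun k a b => ((k + 1 : ℕ) : ℝ) • c (k + 1) a b

/-- `∂_{θ₋}`, acting by `∂_{θ₋}(z^k θ₋^a θ₊^b f) = (-1)^k a z^k θ₊^b f`. -/
def Dthm (c : SF A) : SF A := fun k a b => if a then 0 else ((-1 : ℝ) ^ k) • c k true b

/-- `∂_{θ₊}`, acting by `∂_{θ₊}(z^k θ₋^a θ₊^b f) = (-1)^k b z^k θ₋^a f`. -/
def Dthp (c : SF A) : SF A := fun k a b => if b then 0 else ((-1 : ℝ) ^ k) • c k a true

/-- Left multiplication by `θ₋` (recall `z θ₋ = -θ₋ z`). -/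
def Mthm (c : SF A) : SF A := fun k a b => if a then ((-1 : ℝ) ^ k) • c k false b else 0

/-- Left multiplication by `θ₊` (recall `z θ₊ = -θ₊ z`). -/
def Mthp (c : SF A) : SF A := fun k a b => if b then ((-1 : ℝ) ^ k) • c k a false else 0

/-- The supercharge `Q₋ = ∂_{θ₋} + ½ θ₋ ∂₋ − ½ θ₊ ∂_z`. -/
def Qm (c : SF A) : SF A := Dthm c + (1/2 : ℝ) • Mthm (Pm c) - (1/2 : ℝ) • Mthp (Pz c)

/-- The supercharge `Q₊ = ∂_{θ₊} + ½ θ₊ ∂₊ + ½ θ₋ ∂_z`. -/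
def Qp (c : SF A) : SF A := Dthp c + (1/2 : ℝ) • Mthp (Pp c) + (1/2 : ℝ) • Mthm (Pz c)

/-- The SUSY covariant derivative `D₋ = ∂_{θ₋} − ½ θ₋ ∂₋ + ½ θ₊ ∂_z`. -/
def Dm (c : SF A) : SF A := Dthm c - (1/2 : ℝ) • Mthm (Pm c) + (1/2 : ℝ) • Mthp (Pz c)

/-- The SUSY covariant derivative `D₊ = ∂_{θ₊} − ½ θ₊ ∂₊ − ½ θ₋ ∂_z`. -/
def Dp (c : SF A) : SF A := Dthp c - (1/2 : ℝ) • Mthp (Pp c) - (1/2 : ℝ) • Mthm (Pz c)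

end SF

/-- The Koszul sign occurring when forming the normal form of the product
`(z^k θ₋^a θ₊^b f)·(z^l θ₋^{a'} θ₊^{b'} g)`, where the left factor is a coefficient term of a
homogeneous superfield of total `ℤ₂²`-degree `δ` (so that `f` is homogeneous of degree
`δ + mdeg k a b`). -/
def koz (δ : G2) (k : ℕ) (a b : Bool) (l : ℕ) (a' b' : Bool) : ℝ :=
  ksign (ip (δ + mdeg k a b) (mdeg l a' b') + (l : ZMod 2) * (bz a + bz b))

/-- The product of superfields in `𝒜_A`, where `δ` is the total `ℤ₂²`-degree of the
(homogeneous) left factor. -/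
def SF.mul {A : Type*} [NormedRing A] [NormedAlgebra ℝ A] (δ : G2) (c d : SF A) : SF A :=
  fun n e f x =>
    ∑ k ∈ Finset.range (n + 1), ∑ a : Bool, ∑ b : Bool, ∑ a' : Bool, ∑ b' : Bool,
      if (a != a') = e ∧ (a && a') = false ∧ (b != b') = f ∧ (b && b') = false then
        koz δ k a b (n - k) a' b' • (c k a b x * d (n - k) a' b' x)
      else 0

/-- The superfield `Φ = X + θ₋ ψ₊ + θ₊ ψ₋ + θ₋θ₊ F + z G + z θ₋ χ₊ + z θ₊ χ₋ + z θ₋θ₊ Y`. -/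
def mkPhi {A : Type*} [NormedRing A] [NormedAlgebra ℝ A]
    (X ψp ψm F G χp χm Y : E2 → A) : SF A := fun k a b =>
  match k, a, b with
  | 0, false, false => X
  | 0, true,  false => ψp
  | 0, false, true  => ψm
  | 0, true,  true  => F
  | 1, false, false => G
  | 1, true,  false => χp
  | 1, false, true  => χm
  | 1, true,  true  => Y
  | _, _, _ => 0

/-- Left multiplication of a superfield by a constant `ε ∈ A` of `ℤ₂²`-degree `γ`:
`ε · z^k θ₋^a θ₊^b f = (-1)^{⟨γ, mdeg k a b⟩} z^k θ₋^a θ₊^b (ε f)`. -/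
def Cmul {A : Type*} [NormedRing A] [NormedAlgebra ℝ A] (γ : G2) (ε : A) (c : SF A) : SF A :=
  fun k a b p => ksign (ip γ (mdeg k a b)) • (ε * c k a b p)

section AuxEL

variable {A : Type*} [NormedRing A] [NormedAlgebra ℝ A]

lemma SF.Dm_00 (c : SF A) : SF.Dm c 0 false false = c 0 true false := by
  funext p
  simp [SF.Dm, SF.Dthm, SF.Mthm, SF.Mthp]

lemma SF.Dm_0tf (c : SF A) :
    SF.Dm c 0 true false = (-(1/2) : ℝ) • pdm (c 0 false false) := by
  funext p
  simp [SF.Dm, SF.Dthm, SF.Mthm, SF.Mthp, SF.Pm]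

lemma SF.Dm_0ft (c : SF A) :
    SF.Dm c 0 false true = c 0 true true + (1/2 : ℝ) • c 1 false false := by
  funext p
  simp [SF.Dm, SF.Dthm, SF.Mthm, SF.Mthp, SF.Pz]

lemma SF.Dm_0tt (c : SF A) :
    SF.Dm c 0 true true
      = (-(1/2) : ℝ) • pdm (c 0 false true) + (1/2 : ℝ) • c 1 true false := by
  funext p
  simp [SF.Dm, SF.Dthm, SF.Mthm, SF.Mthp, SF.Pm, SF.Pz]

lemma SF.Dp_00 (c : SF A) : SF.Dp c 0 false false = c 0 false true := by
  funext p
  simp [SF.Dp, SF.Dthp, SF.Mthm, SF.Mthp]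

lemma SF.Dp_0tf (c : SF A) :
    SF.Dp c 0 true false = c 0 true true - (1/2 : ℝ) • c 1 false false := by
  funext p
  simp [SF.Dp, SF.Dthp, SF.Mthm, SF.Mthp, SF.Pz]

lemma SF.Dp_0ft (c : SF A) :
    SF.Dp c 0 false true = (-(1/2) : ℝ) • pdp (c 0 false false) := by
  funext p
  simp [SF.Dp, SF.Dthp, SF.Mthm, SF.Mthp, SF.Pp]

lemma SF.Dp_0tt (c : SF A) :
    SF.Dp c 0 true true
      = (-(1/2) : ℝ) • pdp (c 0 true false) - (1/2 : ℝ) • c 1 false true := by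
  funext p
  simp [SF.Dp, SF.Dthp, SF.Mthm, SF.Mthp, SF.Pp, SF.Pz]

end AuxEL

section AuxDeriv

variable {W : Type*} [NormedAddCommGroup W] [NormedSpace ℝ W]

lemma pdm_const_smul (c : ℝ) {f : E2 → W} (hf : Differentiable ℝ f) :
    pdm (c • f) = c • pdm f := by
  funext p
  have : (c • f) = fun y => c • f y := rfl
  simp only [pdm, Pi.smul_apply, this, fderiv_fun_const_smul (hf p) c,
    ContinuousLinearMap.smul_apply]

lemma pdp_const_smul (c : ℝ) {f : E2 → W} (hf : Differentiable ℝ f) :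
    pdp (c • f) = c • pdp f := by
  funext p
  have : (c • f) = fun y => c • f y := rfl
  simp only [pdp, Pi.smul_apply, this, fderiv_fun_const_smul (hf p) c,
    ContinuousLinearMap.smul_apply]

lemma diff_pdm {f : E2 → W} (hf : ContDiff ℝ (⊤ : ℕ∞) f) : Differentiable ℝ (pdm f) := by
  have h : ContDiff ℝ (⊤ : ℕ∞) (fderiv ℝ f) := (contDiff_infty_iff_fderiv.mp hf).2
  exact (h.differentiable (by simp)).clm_apply (differentiable_const _)

lemma diff_pdp {f : E2 → W} (hf : ContDiff ℝ (⊤ : ℕ∞) f) : Differentiable ℝ (pdp f) := by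
  have h : ContDiff ℝ (⊤ : ℕ∞) (fderiv ℝ f) := (contDiff_infty_iff_fderiv.mp hf).2
  exact (h.differentiable (by simp)).clm_apply (differentiable_const _)

lemma pd_symm {f : E2 → W} (hf : ContDiff ℝ (⊤ : ℕ∞) f) :
    pdp (pdm f) = pdm (pdp f) := by
  funext p
  have hd : Differentiable ℝ (fderiv ℝ f) :=
    ((contDiff_infty_iff_fderiv.mp hf).2).differentiable (by simp)
  have hsym :=
    second_derivative_symmetric (f := f) (f' := fderiv ℝ f)
      (f'' := fderiv ℝ (fderiv ℝ f) p) (x := p)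
      (fun y => ((hf.differentiable (by simp)) y).hasFDerivAt) ((hd p).hasFDerivAt)
  have h1 : pdm f = fun q => fderiv ℝ f q ((1 : ℝ), (0 : ℝ)) := rfl
  have h2 : pdp f = fun q => fderiv ℝ f q ((0 : ℝ), (1 : ℝ)) := rfl
  have e1 : fderiv ℝ (fun q => fderiv ℝ f q ((1 : ℝ), (0 : ℝ))) p
      = (fderiv ℝ (fderiv ℝ f) p).flip ((1 : ℝ), (0 : ℝ)) := by
    rw [fderiv_clm_apply (hd p) (differentiableAt_const _)]
    simp
  have e2 : fderiv ℝ (fun q => fderiv ℝ f q ((0 : ℝ), (1 : ℝ))) p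
      = (fderiv ℝ (fderiv ℝ f) p).flip ((0 : ℝ), (1 : ℝ)) := by
    rw [fderiv_clm_apply (hd p) (differentiableAt_const _)]
    simp
  show fderiv ℝ (pdm f) p ((0 : ℝ), (1 : ℝ)) = fderiv ℝ (pdp f) p ((1 : ℝ), (0 : ℝ))
  rw [h1, h2, e1, e2]
  simpa using hsym ((0 : ℝ), (1 : ℝ)) ((1 : ℝ), (0 : ℝ))

end AuxDeriv

open SF in
/-- The `ℤ₂²`-superspace Euler–Lagrange equation of the free linear sigma model: for a
`z`-constrained degree-`(0,0)` superfield `Φ = X + θ₋ψ₊ + θ₊ψ₋ + θ₋θ₊F + zθ₋θ₊Y`, the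
`z`-degree-zero part of `(D₋∘D₊ + D₊∘D₋)Φ` vanishes identically if and only if the free
component equations of motion hold: `F = 0`, `∂₊ψ₊ = 0`, `∂₋ψ₋ = 0`, `∂₋∂₊X = 0`. -/
theorem superspace_euler_lagrange_iff_component_equations_of_motion
    {A : Type*} [NormedRing A] [NormedAlgebra ℝ A] [CompleteSpace A]
    (𝒜 : G2 → Submodule ℝ A)
    (hK : ∀ γ γ' (u v : A), u ∈ 𝒜 γ → v ∈ 𝒜 γ' → u * v = ksign (ip γ γ') • (v * u))
    (X ψp ψm F Y : E2 → A)
    (hXs : ContDiff ℝ (⊤ : ℕ∞) X) (hψps : ContDiff ℝ (⊤ : ℕ∞) ψp)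
    (hψms : ContDiff ℝ (⊤ : ℕ∞) ψm) (hFs : ContDiff ℝ (⊤ : ℕ∞) F)
    (hYs : ContDiff ℝ (⊤ : ℕ∞) Y)
    (hXd : ∀ p, X p ∈ 𝒜 (0, 0)) (hψpd : ∀ p, ψp p ∈ 𝒜 (0, 1))
    (hψmd : ∀ p, ψm p ∈ 𝒜 (1, 0)) (hFd : ∀ p, F p ∈ 𝒜 (1, 1))
    (hYd : ∀ p, Y p ∈ 𝒜 (0, 0)) :
    (∀ a b : Bool,
        (Dm (Dp (mkPhi X ψp ψm F 0 0 0 Y)) + Dp (Dm (mkPhi X ψp ψm F 0 0 0 Y))) 0 a b = 0)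
      ↔ (F = 0 ∧ pdp ψp = 0 ∧ pdm ψm = 0 ∧ pdm (pdp X) = 0) := by
  set Φ : SF A := mkPhi X ψp ψm F 0 0 0 Y with hΦ
  -- entries of Φ
  have e0ff : Φ 0 false false = X := rfl
  have e0tf : Φ 0 true false = ψp := rfl
  have e0ft : Φ 0 false true = ψm := rfl
  have e0tt : Φ 0 true true = F := rfl
  have e1ff : Φ 1 false false = 0 := rfl
  have e1tf : Φ 1 true false = 0 := rfl
  have e1ft : Φ 1 false true = 0 := rfl
  have e1tt : Φ 1 true true = Y := rfl
  -- entries of Dp Φ and Dm Φ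
  have hp1 : Dp Φ 0 false false = ψm := by rw [SF.Dp_00, e0ft]
  have hp3 : Dp Φ 0 false true = (-(1/2) : ℝ) • pdp X := by rw [SF.Dp_0ft, e0ff]
  have hp4 : Dp Φ 0 true true = (-(1/2) : ℝ) • pdp ψp := by
    rw [SF.Dp_0tt, e0tf, e1ft]; simp
  have hp6 : Dp Φ 1 true false = (-1 : ℝ) • Y := by
    funext p
    simp [SF.Dp, SF.Dthp, SF.Mthm, SF.Mthp, SF.Pp, SF.Pz, hΦ, mkPhi]
  have hm1 : Dm Φ 0 false false = ψp := by rw [SF.Dm_00, e0tf]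
  have hm2 : Dm Φ 0 true false = (-(1/2) : ℝ) • pdm X := by rw [SF.Dm_0tf, e0ff]
  have hm4 : Dm Φ 0 true true = (-(1/2) : ℝ) • pdm ψm := by
    rw [SF.Dm_0tt, e0ft, e1tf]; simp
  have hm5 : Dm Φ 1 false false = 0 := by
    funext p
    simp [SF.Dm, SF.Dthm, SF.Mthm, SF.Mthp, SF.Pm, SF.Pz, hΦ, mkPhi]
  have hm6 : Dm Φ 1 false true = (-1 : ℝ) • Y := by
    funext p
    simp [SF.Dm, SF.Dthm, SF.Mthm, SF.Mthp, SF.Pm, SF.Pz, hΦ, mkPhi]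
  have hp5 : Dp Φ 1 false false = 0 := by
    funext p
    simp [SF.Dp, SF.Dthp, SF.Mthm, SF.Mthp, SF.Pp, SF.Pz, hΦ, mkPhi]
  -- differentiability facts
  have hdX : Differentiable ℝ X := hXs.differentiable (by simp)
  have hdψp : Differentiable ℝ ψp := hψps.differentiable (by simp)
  have hdψm : Differentiable ℝ ψm := hψms.differentiable (by simp)
  have hdpX : Differentiable ℝ (pdp X) := diff_pdp hXs
  have hdmX : Differentiable ℝ (pdm X) := diff_pdm hXs
  -- the four components of the EL superfield
  have hT1 : (Dm (Dp Φ) + Dp (Dm Φ)) 0 false false = F + F := by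
    have a1 : Dm (Dp Φ) 0 false false = F := by
      rw [SF.Dm_00, SF.Dp_0tf, e0tt, e1ff]; simp
    have a2 : Dp (Dm Φ) 0 false false = F := by
      rw [SF.Dp_00, SF.Dm_0ft, e0tt, e1ff]; simp
    have : (Dm (Dp Φ) + Dp (Dm Φ)) 0 false false
        = Dm (Dp Φ) 0 false false + Dp (Dm Φ) 0 false false := rfl
    rw [this, a1, a2]
  have hT2 : (Dm (Dp Φ) + Dp (Dm Φ)) 0 true false
      = (-(1/2) : ℝ) • pdm ψm + (-(1/2) : ℝ) • pdm ψm := by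
    have a1 : Dm (Dp Φ) 0 true false = (-(1/2) : ℝ) • pdm ψm := by
      rw [SF.Dm_0tf, hp1]
    have a2 : Dp (Dm Φ) 0 true false = (-(1/2) : ℝ) • pdm ψm := by
      rw [SF.Dp_0tf, hm4, hm5]; simp
    have : (Dm (Dp Φ) + Dp (Dm Φ)) 0 true false
        = Dm (Dp Φ) 0 true false + Dp (Dm Φ) 0 true false := rfl
    rw [this, a1, a2]
  have hT3 : (Dm (Dp Φ) + Dp (Dm Φ)) 0 false true
      = (-(1/2) : ℝ) • pdp ψp + (-(1/2) : ℝ) • pdp ψp := by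
    have a1 : Dm (Dp Φ) 0 false true = (-(1/2) : ℝ) • pdp ψp := by
      rw [SF.Dm_0ft, hp4, hp5]; simp
    have a2 : Dp (Dm Φ) 0 false true = (-(1/2) : ℝ) • pdp ψp := by
      rw [SF.Dp_0ft, hm1]
    have : (Dm (Dp Φ) + Dp (Dm Φ)) 0 false true
        = Dm (Dp Φ) 0 false true + Dp (Dm Φ) 0 false true := rfl
    rw [this, a1, a2]
  have hT4 : (Dm (Dp Φ) + Dp (Dm Φ)) 0 true true = (1/2 : ℝ) • pdm (pdp X) := by
    have a1 : Dm (Dp Φ) 0 true true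
        = (1/4 : ℝ) • pdm (pdp X) + (-(1/2) : ℝ) • Y := by
      rw [SF.Dm_0tt, hp3, hp6, pdm_const_smul _ hdpX]
      funext p
      simp
      module
    have a2 : Dp (Dm Φ) 0 true true
        = (1/4 : ℝ) • pdp (pdm X) + (1/2 : ℝ) • Y := by
      rw [SF.Dp_0tt, hm2, hm6, pdp_const_smul _ hdmX]
      funext p
      simp
      module
    have : (Dm (Dp Φ) + Dp (Dm Φ)) 0 true true
        = Dm (Dp Φ) 0 true true + Dp (Dm Φ) 0 true true := rfl
    rw [this, a1, a2, pd_symm hXs]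
    funext p
    simp
    module
  constructor
  · intro h
    refine ⟨?_, ?_, ?_, ?_⟩
    · have := h false false
      rw [hT1] at this
      funext p
      have hp := congrFun this p
      simp only [Pi.add_apply, Pi.zero_apply] at hp ⊢
      have : (2 : ℝ) • F p = 0 := by rw [two_smul]; exact hp
      simpa using (smul_eq_zero.mp this).resolve_left (by norm_num)
    · have := h false true
      rw [hT3] at this
      funext p
      have hp := congrFun this p
      simp only [Pi.add_apply, Pi.smul_apply, Pi.zero_apply] at hp ⊢
      have h2 : (-1 : ℝ) • pdp ψp p = 0 := by
        rw [show (-1 : ℝ) = -(1/2) + -(1/2) by norm_num, add_smul]; exact hp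
      simpa using (smul_eq_zero.mp h2).resolve_left (by norm_num)
    · have := h true false
      rw [hT2] at this
      funext p
      have hp := congrFun this p
      simp only [Pi.add_apply, Pi.smul_apply, Pi.zero_apply] at hp ⊢
      have h2 : (-1 : ℝ) • pdm ψm p = 0 := by
        rw [show (-1 : ℝ) = -(1/2) + -(1/2) by norm_num, add_smul]; exact hp
      simpa using (smul_eq_zero.mp h2).resolve_left (by norm_num)
    · have := h true true
      rw [hT4] at this
      funext p
      have hp := congrFun this p
      simp only [Pi.smul_apply, Pi.zero_apply] at hp ⊢
      simpa using (smul_eq_zero.mp hp).resolve_left (by norm_num)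
  · rintro ⟨h1, h2, h3, h4⟩
    intro a b
    cases a <;> cases b
    · rw [hT1, h1]; simp
    · rw [hT3, h2]; simp
    · rw [hT2, h3]; simp
    · rw [hT4, h4]; simp
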